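/- arXiv:2105.08309 — 2 statements merged into one kernel-verified Lean document; each statement's English description precedes it below -/
import Mathlib

section
/- Let H be a finite-dimensional complex inner product space, U a unitary on H, and let ε, W > 0 with W > ε. Set Θ := ε²/W and δ := ε. For Θ' ∈ [0, π] let P_{Θ'} be the orthogonal projection onto the span of all eigenvectors of U with eigenvalue e^{iθ}, θ ∈ (−π, π], |θ| ≤ Θ', and let P₀ be the projection onto the fixed space of U. Let φ₊, φ₋ ∈ H be unit vectors with ‖P₀ φ₊‖² ≥ 1 − ε² and ‖P_Θ φ₋‖² ≤ (Θ²/4)·(1 + W²/(4ε²)). Let K be a finite-dimensional complex inner product space, κ ∈ K a unit vector, and R a unitary on H ⊗ K such that R(u ⊗ κ) = u ⊗ κ for every u ∈ H with U u = u, and ‖(R + I)(ν ⊗ κ)‖ ≤ δ·‖ν‖ for every ν ∈ H orthogonal to the range of P_Θ. Then ‖R(((φ₊ + φ₋)/√2) ⊗ κ) − ((φ₊ − φ₋)/√2) ⊗ κ‖ < 4ε. -/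
/-!
Split `φ₊ = P₀φ₊ + (φ₊ - P₀φ₊)` and `φ₋ = P_Θφ₋ + (φ₋ - P_Θφ₋)`. Since `R` fixes `P₀φ₊ ⊗ κ`,
`‖R(φ₊ ⊗ κ) - φ₊ ⊗ κ‖ ≤ 2‖φ₊ - P₀φ₊‖ ≤ 2ε`. The small component `P_Θφ₋` (of norm at most `ε`)
contributes at most `2ε` to `‖R(φ₋ ⊗ κ) + φ₋ ⊗ κ‖`, and the component orthogonal to the range
of `P_Θ` at most `δ = ε`. Hence the error is at most `(2ε + 3ε)/√2 < 4ε`.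
-/

open scoped InnerProductSpace

noncomputable section

def IsOrthProj {H : Type*} [NormedAddCommGroup H] [InnerProductSpace ℂ H]
    (P : H →ₗ[ℂ] H) : Prop :=
  P ∘ₗ P = P ∧ ∀ x y : H, ⟪P x, y⟫_ℂ = ⟪x, P y⟫_ℂ

namespace IsOrthProj

variable {H : Type*} [NormedAddCommGroup H] [InnerProductSpace ℂ H] {P : H →ₗ[ℂ] H}

theorem apply_apply (hP : IsOrthProj P) (x : H) : P (P x) = P x :=
  LinearMap.congr_fun hP.1 x

theorem inner_sub_apply_eq_zero_of_mem_range (hP : IsOrthProj P) (x : H) :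
    ∀ y ∈ LinearMap.range P, ⟪y, x - P x⟫_ℂ = 0 := by
  rintro _ ⟨z, rfl⟩
  rw [inner_sub_right, hP.2 z x, hP.2 z (P x), hP.apply_apply, sub_self]

theorem norm_sub_apply_sq (hP : IsOrthProj P) (x : H) :
    ‖x - P x‖ ^ 2 = ‖x‖ ^ 2 - ‖P x‖ ^ 2 := by
  have h := norm_add_sq_eq_norm_sq_add_norm_sq_of_inner_eq_zero (P x) (x - P x)
    (hP.inner_sub_apply_eq_zero_of_mem_range x _ (LinearMap.mem_range_self P x))
  rw [add_sub_cancel] at h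
  linarith

theorem norm_sub_apply_le (hP : IsOrthProj P) (x : H) : ‖x - P x‖ ≤ ‖x‖ :=
  le_of_pow_le_pow_left₀ two_ne_zero (norm_nonneg x) <| by
    rw [hP.norm_sub_apply_sq]
    linarith [sq_nonneg ‖P x‖]

end IsOrthProj

theorem apply_eq_self_of_mem_span_fixed {R M F : Type*} [Semiring R] [AddCommMonoid M]
    [Module R M] [FunLike F M M] [LinearMapClass F R M M] (f : F) {x : M}
    (hx : x ∈ Submodule.span R {u : M | f u = u}) : f x = x :=
  Submodule.span_le (p := LinearMap.eqLocus (f : M →ₗ[R] M) LinearMap.id).2 (fun _ hu => hu) hx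

section LinearIsometry

variable {𝕜 E : Type*} [RCLike 𝕜] [SeminormedAddCommGroup E] [NormedSpace 𝕜 E]

theorem LinearIsometry.norm_map_sub_self_le_of_map_eq (R : E →ₗᵢ[𝕜] E) {w : E}
    (hw : R w = w) (x : E) : ‖R x - x‖ ≤ 2 * ‖x - w‖ := by
  have h : R x - x = R (x - w) - (x - w) := by rw [map_sub, hw]; abel
  rw [h]
  exact (norm_sub_le _ _).trans_eq (by rw [R.norm_map, two_mul])

theorem LinearIsometry.norm_map_add_self_le (R : E →ₗᵢ[𝕜] E) (x w : E) :
    ‖R x + x‖ ≤ 2 * ‖w‖ + ‖R (x - w) + (x - w)‖ := by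
  have h : R x + x = (R w + w) + (R (x - w) + (x - w)) := by rw [map_sub]; abel
  calc ‖R x + x‖ ≤ ‖R w + w‖ + ‖R (x - w) + (x - w)‖ := h ▸ norm_add_le _ _
    _ ≤ 2 * ‖w‖ + ‖R (x - w) + (x - w)‖ := by
      gcongr
      exact (norm_add_le _ _).trans_eq (by rw [R.norm_map, two_mul])

theorem norm_map_smul_add_sub_smul_sub_le (R : E →ₗ[𝕜] E) (c : 𝕜) (a b : E) :
    ‖R (c • (a + b)) - c • (a - b)‖ ≤ ‖c‖ * (‖R a - a‖ + ‖R b + b‖) := by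
  have h : R (c • (a + b)) - c • (a - b) = c • ((R a - a) + (R b + b)) := by
    rw [map_smul, map_add]; module
  rw [h, norm_smul]
  gcongr
  exact norm_add_le _ _

end LinearIsometry

section PhaseDetection

variable {H T : Type*} [NormedAddCommGroup H] [InnerProductSpace ℂ H]
  [NormedAddCommGroup T] [InnerProductSpace ℂ T]
  (R : T →ₗᵢ[ℂ] T) (J : H →ₗᵢ[ℂ] T) {P : H →ₗ[ℂ] H} {x : H} {ε : ℝ}

theorem norm_map_sub_self_le_of_map_eq_of_isOrthProj (hP : IsOrthProj P)
    (hfix : R (J (P x)) = J (P x)) (hε : 0 ≤ ε) (hPx : ‖x‖ ^ 2 - ε ^ 2 ≤ ‖P x‖ ^ 2) :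
    ‖R (J x) - J x‖ ≤ 2 * ε := by
  have hsq : ‖x - P x‖ ^ 2 ≤ ε ^ 2 := by rw [hP.norm_sub_apply_sq]; linarith
  calc ‖R (J x) - J x‖ ≤ 2 * ‖J x - J (P x)‖ := R.norm_map_sub_self_le_of_map_eq hfix _
    _ ≤ 2 * ε := by
        rw [← map_sub, J.norm_map]
        gcongr
        exact le_of_pow_le_pow_left₀ two_ne_zero hε hsq

theorem norm_map_add_self_le_of_isOrthProj (hP : IsOrthProj P) (hPx : ‖P x‖ ≤ ε) {δ : ℝ}
    (hδ : 0 ≤ δ) (hrefl : ‖R (J (x - P x)) + J (x - P x)‖ ≤ δ * ‖x - P x‖) :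
    ‖R (J x) + J x‖ ≤ 2 * ε + δ * ‖x‖ :=
  calc ‖R (J x) + J x‖ ≤ 2 * ‖J (P x)‖ + ‖R (J x - J (P x)) + (J x - J (P x))‖ :=
        R.norm_map_add_self_le _ _
    _ ≤ 2 * ε + δ * ‖x‖ := by
        rw [← map_sub, J.norm_map]
        gcongr
        exact hrefl.trans (by gcongr; exact hP.norm_sub_apply_le x)

end PhaseDetection

theorem div_sq_div_four_mul_one_add_le_sq {ε W : ℝ} (hε : 0 < ε) (hW : ε ≤ W) :
    (ε ^ 2 / W) ^ 2 / 4 * (1 + W ^ 2 / (4 * ε ^ 2)) ≤ ε ^ 2 := by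
  have hW0 : 0 < W := hε.trans_le hW
  have hΘ : ε ^ 2 / W ≤ ε := by rw [div_le_iff₀ hW0]; nlinarith
  have hΘsq : (ε ^ 2 / W) ^ 2 ≤ ε ^ 2 := pow_le_pow_left₀ (by positivity) hΘ 2
  have h : (ε ^ 2 / W) ^ 2 / 4 * (1 + W ^ 2 / (4 * ε ^ 2)) =
      (ε ^ 2 / W) ^ 2 / 4 + ε ^ 2 / 16 := by
    field_simp; ring
  rw [h]
  nlinarith

/-- `T` and `tp` model the tensor product `H ⊗ K` with `tp a b = a ⊗ b`. -/
theorem phase_detection_error_general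
    {H K T : Type*}
    [NormedAddCommGroup H] [InnerProductSpace ℂ H]
    [NormedAddCommGroup K] [InnerProductSpace ℂ K]
    [NormedAddCommGroup T] [InnerProductSpace ℂ T]
    (tp : H →ₗ[ℂ] K →ₗ[ℂ] T)
    (htp : ∀ (a c : H) (b d : K), ⟪tp a b, tp c d⟫_ℂ = ⟪a, c⟫_ℂ * ⟪b, d⟫_ℂ)
    (U : H ≃ₗᵢ[ℂ] H) (ε W : ℝ) (hε : 0 < ε) (hW : ε < W)
    (P0 PΘ : H →ₗ[ℂ] H) (hP0 : IsOrthProj P0) (hPΘ : IsOrthProj PΘ)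
    (hP0range : LinearMap.range P0 = Submodule.span ℂ {u : H | U u = u})
    (φp φm : H) (hφp1 : ‖φp‖ = 1) (hφm1 : ‖φm‖ = 1)
    (hP0φp : 1 - ε ^ 2 ≤ ‖P0 φp‖ ^ 2)
    (hPΘφm : ‖PΘ φm‖ ^ 2 ≤ ((ε ^ 2 / W) ^ 2 / 4) * (1 + W ^ 2 / (4 * ε ^ 2)))
    (κ : K) (hκ : ‖κ‖ = 1)
    (R : T ≃ₗᵢ[ℂ] T)
    (hRfix : ∀ u : H, U u = u → R (tp u κ) = tp u κ)
    (hRrefl : ∀ ν : H, (∀ x ∈ LinearMap.range PΘ, ⟪x, ν⟫_ℂ = 0) →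
      ‖R (tp ν κ) + tp ν κ‖ ≤ ε * ‖ν‖) :
    ‖R (tp ((((Real.sqrt 2)⁻¹ : ℝ) : ℂ) • (φp + φm)) κ) -
      tp ((((Real.sqrt 2)⁻¹ : ℝ) : ℂ) • (φp - φm)) κ‖ < 4 * ε := by
  set J : H →ₗᵢ[ℂ] T := (tp.flip κ).isometryOfInner fun a c => by
    simp [htp, inner_self_eq_norm_sq_to_K, hκ]
  change ‖R (J _) - J _‖ < 4 * ε
  have hfix : U (P0 φp) = P0 φp :=
    apply_eq_self_of_mem_span_fixed U (hP0range ▸ LinearMap.mem_range_self P0 φp)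
  have hplus : ‖R (J φp) - J φp‖ ≤ 2 * ε :=
    norm_map_sub_self_le_of_map_eq_of_isOrthProj R.toLinearIsometry J hP0 (hRfix _ hfix)
      hε.le (by rw [hφp1]; linarith)
  have hsmall : ‖PΘ φm‖ ≤ ε := le_of_pow_le_pow_left₀ two_ne_zero hε.le
    (hPΘφm.trans (div_sq_div_four_mul_one_add_le_sq hε hW.le))
  have hminus : ‖R (J φm) + J φm‖ ≤ 3 * ε :=
    (norm_map_add_self_le_of_isOrthProj R.toLinearIsometry J hPΘ hsmall hε.le
      (hRrefl _ (hPΘ.inner_sub_apply_eq_zero_of_mem_range φm))).trans (by rw [hφm1]; linarith)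
  have hsqrt2 : 5 < 4 * Real.sqrt 2 := by
    nlinarith [Real.sq_sqrt (zero_le_two : (0 : ℝ) ≤ 2), Real.sqrt_nonneg 2]
  calc ‖R (J _) - J _‖
      ≤ ‖(((Real.sqrt 2)⁻¹ : ℝ) : ℂ)‖ * (‖R (J φp) - J φp‖ + ‖R (J φm) + J φm‖) := by
        rw [map_smul J, map_add J, map_smul J, map_sub J]
        exact norm_map_smul_add_sub_smul_sub_le (R : T →ₗ[ℂ] T) _ _ _
    _ ≤ (Real.sqrt 2)⁻¹ * (5 * ε) := by
        rw [Complex.norm_real, Real.norm_of_nonneg (by positivity)]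
        gcongr
        linarith
    _ < 4 * ε := by
        rw [inv_mul_lt_iff₀ (by positivity)]
        nlinarith

/-- Error analysis of the phase-detection algorithm.  Here `T`, together with the bilinear map
`tp` satisfying `⟪a ⊗ b, c ⊗ d⟫ = ⟪a, c⟫⟪b, d⟫` and whose image spans `T`, is the Hilbert-space
tensor product `H ⊗ K`.  `U` is a unitary on `H`, `Θ = ε²/W`, `δ = ε`, `P₀`/`P_Θ` are the
projections onto the span of the eigenvectors of `U` with phase `0` resp. at most `Θ`, `κ ∈ K`
is a unit vector and `R` is a unitary on `H ⊗ K` which fixes `u ⊗ κ` for fixed points `u` of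
`U` and satisfies `‖(R + I)(ν ⊗ κ)‖ ≤ δ‖ν‖` whenever `ν ⊥ range P_Θ`.  If
`‖P₀ φ₊‖² ≥ 1 − ε²` and `‖P_Θ φ₋‖² ≤ (Θ²/4)(1 + W²/(4ε²))` for unit vectors `φ₊, φ₋`, then
`‖R(((φ₊ + φ₋)/√2) ⊗ κ) − ((φ₊ − φ₋)/√2) ⊗ κ‖ < 4ε`. -/
theorem phase_detection_error
    {H K T : Type*}
    [NormedAddCommGroup H] [InnerProductSpace ℂ H] [FiniteDimensional ℂ H]
    [NormedAddCommGroup K] [InnerProductSpace ℂ K] [FiniteDimensional ℂ K]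
    [NormedAddCommGroup T] [InnerProductSpace ℂ T] [FiniteDimensional ℂ T]
    (tp : H →ₗ[ℂ] K →ₗ[ℂ] T)
    (htp : ∀ (a c : H) (b d : K), ⟪tp a b, tp c d⟫_ℂ = ⟪a, c⟫_ℂ * ⟪b, d⟫_ℂ)
    (htpspan : Submodule.span ℂ {x : T | ∃ a b, x = tp a b} = ⊤)
    (U : H ≃ₗᵢ[ℂ] H) (ε W : ℝ) (hε : 0 < ε) (hW : ε < W)
    (P0 PΘ : H →ₗ[ℂ] H) (hP0 : IsOrthProj P0) (hPΘ : IsOrthProj PΘ)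
    (hP0range : LinearMap.range P0 = Submodule.span ℂ {u : H | U u = u})
    (hPΘrange : LinearMap.range PΘ = Submodule.span ℂ
      {u : H | ∃ θ : ℝ, θ ∈ Set.Ioc (-Real.pi) Real.pi ∧ |θ| ≤ ε ^ 2 / W ∧
        U u = Complex.exp (θ * Complex.I) • u})
    (φp φm : H) (hφp1 : ‖φp‖ = 1) (hφm1 : ‖φm‖ = 1)
    (hP0φp : 1 - ε ^ 2 ≤ ‖P0 φp‖ ^ 2)
    (hPΘφm : ‖PΘ φm‖ ^ 2 ≤ ((ε ^ 2 / W) ^ 2 / 4) * (1 + W ^ 2 / (4 * ε ^ 2)))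
    (κ : K) (hκ : ‖κ‖ = 1)
    (R : T ≃ₗᵢ[ℂ] T)
    (hRfix : ∀ u : H, U u = u → R (tp u κ) = tp u κ)
    (hRrefl : ∀ ν : H, (∀ x ∈ LinearMap.range PΘ, ⟪x, ν⟫_ℂ = 0) →
      ‖R (tp ν κ) + tp ν κ‖ ≤ ε * ‖ν‖) :
    ‖R (tp ((((Real.sqrt 2)⁻¹ : ℝ) : ℂ) • (φp + φm)) κ) -
      tp ((((Real.sqrt 2)⁻¹ : ℝ) : ℂ) • (φp - φm)) κ‖ < 4 * ε :=
  phase_detection_error_general tp htp U ε W hε hW P0 PΘ hP0 hPΘ hP0range φp φm hφp1 hφm1 hP0φp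
    hPΘφm κ hκ R hRfix hRrefl

end
end

section
/- Let 𝒯 be a finite rooted binary tree with root z₀, edges oriented from parent to child, in which every internal vertex has exactly two children, with one connecting edge colored black and the other red (a G-coloring). Let T, G ≥ 1 be integers, set W_b := 1/G and W_r := 1/T, and let A : ℂ^E → ℂ^V send the basis vector of an edge e = (u, v) to √W_{c(e)}·(χ_u − χ_v). Fix a leaf z whose root-to-z path has at most T edges of which at most G are red; let w ∈ ℂ^E be the vector supported on the path edges with coordinate W_{c(e)}^{−1/2} on each path edge e, and w̄ := Σ_{v∈P} χ_v where P is the set of path vertices. Then A w = χ_{z₀} − χ_z, ‖w‖² ≤ 2GT, ‖A†w̄‖² ≤ 2, and hence ‖w‖·‖A†w̄‖ ≤ 2·√(GT). -/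
/-!
Along the root-to-`z` path the witness `w` has coordinate `W_e^{-1/2}` on every path edge, so
`A w` telescopes to `χ_root - χ_z`, and `‖w‖² = Σ_{e ∈ path} 1/W_e = G·#black + T·#red ≤ 2GT`.
Since the path is closed under taking parents, `A†w̄` is supported on the edges leaving the
path, with `‖A†w̄‖² = Σ W_e` over those edges. Each of them hangs below a path vertex other
than the leaf `z`, next to a path edge of the opposite colour, and distinct ones have distinct
such path siblings, so `‖A†w̄‖² ≤ #black/T + #red/G ≤ 1 + 1`.
-/

open scoped InnerProductSpace

open Finset

theorem Finset.sum_comp_le_sum_of_injOn {α β M : Type*} [AddCommMonoid M] [PartialOrder M]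
    [IsOrderedAddMonoid M] [DecidableEq β] {s : Finset α} {t : Finset β} {g : α → β}
    {f : β → M} (hg : ∀ a ∈ s, g a ∈ t) (hinj : Set.InjOn g s) (hf : ∀ b ∈ t, 0 ≤ f b) :
    ∑ a ∈ s, f (g a) ≤ ∑ b ∈ t, f b := by
  rw [← sum_image hinj]
  exact sum_le_sum_of_subset_of_nonneg (image_subset_iff.2 hg) fun b hb _ => hf b hb

theorem Finset.sum_comp_bool_le {α : Type*} (s : Finset α) (c : α → Bool) {f : Bool → ℝ}
    (hf : ∀ b, 0 ≤ f b) {m n : ℕ} (hm : #s ≤ m) (hn : #{a ∈ s | c a = false} ≤ n) :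
    ∑ a ∈ s, f (c a) ≤ m * f true + n * f false := by
  have htrue : (#{a ∈ s | c a} : ℝ) ≤ m := by exact_mod_cast (card_filter_le s _).trans hm
  have hite : ∀ a ∈ s, f (c a) = if c a then f true else f false := fun a _ => by
    cases c a <;> rfl
  rw [sum_congr rfl hite, sum_ite, sum_const, sum_const, nsmul_eq_mul, nsmul_eq_mul]
  simp only [Bool.not_eq_true]
  gcongr
  exacts [hf true, hf false]

theorem Finset.sum_subtype_ne_ite {V M : Type*} [Fintype V] [DecidableEq V] [AddCommMonoid M]
    (r : V) (p : V → Prop) [DecidablePred p] (f : V → M) :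
    ∑ e : {v // v ≠ r}, (if p e.1 then f e.1 else 0) = ∑ v with v ≠ r ∧ p v, f v := by
  rw [← filter_filter, sum_filter]
  exact (sum_subtype _ (by simp) (fun v => if p v then f v else 0)).symm

theorem Finset.sum_subtype_ne_ite_mem {V M : Type*} [Fintype V] [DecidableEq V]
    [AddCommMonoid M] (r : V) (s : Finset V) (f : V → M) :
    ∑ e : {v // v ≠ r}, (if e.1 ∈ s then f e.1 else 0) = ∑ v ∈ s.erase r, f v := by
  rw [sum_subtype_ne_ite]
  congr 1
  ext v
  simp

namespace EuclideanSpace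

variable {𝕜 ι : Type*} [RCLike 𝕜] [Fintype ι] [DecidableEq ι]

theorem linearMap_apply_eq_sum {E : Type*} [AddCommGroup E] [Module 𝕜 E]
    (A : EuclideanSpace 𝕜 ι →ₗ[𝕜] E) (x : EuclideanSpace 𝕜 ι) :
    A x = ∑ i, x i • A (single i 1) := by
  conv_lhs => rw [← (basisFun ι 𝕜).sum_repr x]
  simp [basisFun_apply]

theorem adjoint_apply {F : Type*} [NormedAddCommGroup F] [InnerProductSpace 𝕜 F]
    [FiniteDimensional 𝕜 F] (A : EuclideanSpace 𝕜 ι →ₗ[𝕜] F) (y : F) (i : ι) :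
    LinearMap.adjoint A y i = ⟪A (single i 1), y⟫_𝕜 := by
  rw [← LinearMap.adjoint_inner_right, inner_single_left, map_one, one_mul]

end EuclideanSpace

section WeightedIncidence

variable {V : Type*} [Fintype V] [DecidableEq V] {root : V} {parent : V → V} {W : V → ℝ}
  {A : EuclideanSpace ℂ {v : V // v ≠ root} →ₗ[ℂ] EuclideanSpace ℂ V} {P : Finset V}

theorem incidence_apply_eq_sum (hW : ∀ v, 0 < W v)
    (hA : ∀ e : {v : V // v ≠ root}, A (EuclideanSpace.single e 1) =
      ((√(W e.1) : ℝ) : ℂ) •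
        (EuclideanSpace.single (parent e.1) 1 - EuclideanSpace.single e.1 1))
    {w : EuclideanSpace ℂ {v : V // v ≠ root}}
    (hw : ∀ e : {v : V // v ≠ root}, w e = if e.1 ∈ P then (((√(W e.1))⁻¹ : ℝ) : ℂ) else 0) :
    A w = ∑ v ∈ P.erase root,
      (EuclideanSpace.single (parent v) 1 - EuclideanSpace.single v 1 : EuclideanSpace ℂ V) := by
  have hterm : ∀ e : {v : V // v ≠ root}, w e • A (EuclideanSpace.single e 1) =
      if e.1 ∈ P then
        (EuclideanSpace.single (parent e.1) 1 - EuclideanSpace.single e.1 1 : EuclideanSpace ℂ V)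
      else 0 := by
    intro e
    rw [hA, hw]
    split_ifs
    · rw [smul_smul, ← Complex.ofReal_mul, inv_mul_cancel₀ (Real.sqrt_pos.2 (hW e.1)).ne',
        Complex.ofReal_one, one_smul]
    · rw [zero_smul]
  rw [EuclideanSpace.linearMap_apply_eq_sum, Fintype.sum_congr _ _ hterm]
  exact sum_subtype_ne_ite_mem root P fun v =>
    EuclideanSpace.single (parent v) 1 - EuclideanSpace.single v 1

theorem norm_sq_eq_sum_inv_weight (hW : ∀ v, 0 ≤ W v) {w : EuclideanSpace ℂ {v : V // v ≠ root}}
    (hw : ∀ e : {v : V // v ≠ root}, w e = if e.1 ∈ P then (((√(W e.1))⁻¹ : ℝ) : ℂ) else 0) :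
    ‖w‖ ^ 2 = ∑ v ∈ P.erase root, (W v)⁻¹ := by
  have hterm : ∀ e : {v : V // v ≠ root}, ‖w e‖ ^ 2 = if e.1 ∈ P then (W e.1)⁻¹ else 0 := by
    intro e
    rw [hw]
    split_ifs
    · rw [Complex.norm_real, Real.norm_eq_abs, sq_abs, inv_pow, Real.sq_sqrt (hW e.1)]
    · rw [norm_zero, sq, zero_mul]
  rw [EuclideanSpace.norm_sq_eq, Fintype.sum_congr _ _ hterm]
  exact sum_subtype_ne_ite_mem root P fun v => (W v)⁻¹

theorem incidence_adjoint_sum_single_apply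
    (hA : ∀ e : {v : V // v ≠ root}, A (EuclideanSpace.single e 1) =
      ((√(W e.1) : ℝ) : ℂ) •
        (EuclideanSpace.single (parent e.1) 1 - EuclideanSpace.single e.1 1))
    (hP : ∀ v ∈ P, parent v ∈ P) (e : {v : V // v ≠ root}) :
    LinearMap.adjoint A (∑ v ∈ P, EuclideanSpace.single v 1) e =
      if e.1 ∉ P ∧ parent e.1 ∈ P then ((√(W e.1) : ℝ) : ℂ) else 0 := by
  rw [EuclideanSpace.adjoint_apply, hA, inner_smul_left, inner_sub_left, inner_sum, inner_sum]
  simp only [EuclideanSpace.inner_single_left, PiLp.single_apply, Complex.conj_ofReal,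
    map_one, one_mul, sum_ite_eq]
  by_cases he : e.1 ∈ P
  · simp [he, hP _ he]
  · by_cases hpe : parent e.1 ∈ P <;> simp [he, hpe]

theorem norm_sq_incidence_adjoint_sum_single (hW : ∀ v, 0 ≤ W v)
    (hA : ∀ e : {v : V // v ≠ root}, A (EuclideanSpace.single e 1) =
      ((√(W e.1) : ℝ) : ℂ) •
        (EuclideanSpace.single (parent e.1) 1 - EuclideanSpace.single e.1 1))
    (hP : ∀ v ∈ P, parent v ∈ P) :
    ‖LinearMap.adjoint A (∑ v ∈ P, EuclideanSpace.single v 1)‖ ^ 2 =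
      ∑ v with v ≠ root ∧ v ∉ P ∧ parent v ∈ P, W v := by
  have hterm : ∀ e : {v : V // v ≠ root},
      ‖LinearMap.adjoint A (∑ v ∈ P, EuclideanSpace.single v 1) e‖ ^ 2 =
        if e.1 ∉ P ∧ parent e.1 ∈ P then W e.1 else 0 := by
    intro e
    rw [incidence_adjoint_sum_single_apply hA hP]
    split_ifs
    · rw [Complex.norm_real, Real.norm_eq_abs, sq_abs, Real.sq_sqrt (hW e.1)]
    · rw [norm_zero, sq, zero_mul]
  rw [EuclideanSpace.norm_sq_eq, Fintype.sum_congr _ _ hterm]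
  exact sum_subtype_ne_ite root (fun v => v ∉ P ∧ parent v ∈ P) W

end WeightedIncidence

theorem parent_mem_of_mem {V : Type*} {parent : V → V} {z : V} {P : Finset V}
    (hP : ∀ v, v ∈ P ↔ ∃ k, parent^[k] z = v) {v : V} (hv : v ∈ P) :
    parent v ∈ P := by
  obtain ⟨k, rfl⟩ := (hP v).1 hv
  exact (hP _).2 ⟨k + 1, Function.iterate_succ_apply' ..⟩

structure IsRootedTree {V : Type*} (root : V) (parent : V → V) (depth : V → ℕ) : Prop where
  parent_root : parent root = root
  depth_root : depth root = 0
  depth_parent : ∀ v, v ≠ root → depth (parent v) + 1 = depth v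

namespace IsRootedTree

variable {V : Type*} {root : V} {parent : V → V} {depth : V → ℕ}

theorem eq_root_of_depth_eq_zero (ht : IsRootedTree root parent depth) {v : V}
    (hv : depth v = 0) : v = root := by
  by_contra h
  have := ht.depth_parent v h
  omega

theorem depth_iterate_parent (ht : IsRootedTree root parent depth) (z : V) {k : ℕ}
    (hk : k ≤ depth z) : depth (parent^[k] z) = depth z - k := by
  induction k with
  | zero => rfl
  | succ k ih =>
    have hdk := ih (by omega)
    have hne : parent^[k] z ≠ root := by
      intro h
      rw [h, ht.depth_root] at hdk
      omega
    have := ht.depth_parent _ hne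
    rw [Function.iterate_succ_apply']
    omega

theorem iterate_parent_ne_root (ht : IsRootedTree root parent depth) (z : V) {k : ℕ}
    (hk : k < depth z) : parent^[k] z ≠ root := by
  intro h
  have := ht.depth_iterate_parent z hk.le
  rw [h, ht.depth_root] at this
  omega

theorem iterate_parent_of_depth_le (ht : IsRootedTree root parent depth) (z : V) {k : ℕ}
    (hk : depth z ≤ k) : parent^[k] z = root := by
  have hd : parent^[depth z] z = root :=
    ht.eq_root_of_depth_eq_zero (by simp [ht.depth_iterate_parent z le_rfl])
  obtain ⟨m, rfl⟩ := Nat.exists_eq_add_of_le hk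
  rw [add_comm, Function.iterate_add_apply, hd, Function.iterate_fixed ht.parent_root]

theorem injOn_iterate_parent (ht : IsRootedTree root parent depth) (z : V) :
    Set.InjOn (fun k => parent^[k] z) (range (depth z)) := by
  intro j hj k hk h
  have hdj := ht.depth_iterate_parent z (mem_range.1 hj).le
  have hdk := ht.depth_iterate_parent z (mem_range.1 hk).le
  simp only [coe_range, Set.mem_Iio] at hj hk h
  rw [h, hdk] at hdj
  omega

variable {z : V} {P : Finset V}

/-- The path vertex at the depth of `e` is a sibling of `e` when `parent e` lies on the path;
it is not the root because `parent e ≠ z`, `z` being a leaf. -/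
theorem iterate_parent_sub_depth_sibling (ht : IsRootedTree root parent depth)
    (hz : ∀ u, u ≠ root → parent u ≠ z) (hP : ∀ v, v ∈ P ↔ ∃ k, parent^[k] z = v) {e : V}
    (he : e ≠ root) (hpe : parent e ∈ P) :
    parent^[depth z - depth e] z ≠ root ∧ parent (parent^[depth z - depth e] z) = parent e := by
  obtain ⟨i, hi, hpi⟩ : ∃ i ≤ depth z, parent^[i] z = parent e := by
    obtain ⟨j, hj⟩ := (hP _).1 hpe
    rcases le_total j (depth z) with h | h
    · exact ⟨j, h, hj⟩
    · refine ⟨depth z, le_rfl, ?_⟩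
      rw [ht.iterate_parent_of_depth_le z le_rfl, ← ht.iterate_parent_of_depth_le z h, hj]
  have hdpe := ht.depth_iterate_parent z hi
  have hde := ht.depth_parent e he
  rw [hpi] at hdpe
  cases i with
  | zero => exact absurd hpi.symm (hz e he)
  | succ i =>
    have hdi : depth z - depth e = i := by omega
    rw [hdi, ← Function.iterate_succ_apply' parent i z, hpi]
    exact ⟨ht.iterate_parent_ne_root z (by omega), rfl⟩

variable [DecidableEq V]

theorem erase_root_eq_image (ht : IsRootedTree root parent depth)
    (hP : ∀ v, v ∈ P ↔ ∃ k, parent^[k] z = v) :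
    P.erase root = (range (depth z)).image (fun k => parent^[k] z) := by
  ext v
  simp only [mem_erase, hP, mem_image, mem_range]
  constructor
  · rintro ⟨hv, k, rfl⟩
    exact ⟨k, not_le.1 fun hk => hv (ht.iterate_parent_of_depth_le z hk), rfl⟩
  · rintro ⟨k, hk, rfl⟩
    exact ⟨ht.iterate_parent_ne_root z hk, k, rfl⟩

theorem card_erase_root (ht : IsRootedTree root parent depth)
    (hP : ∀ v, v ∈ P ↔ ∃ k, parent^[k] z = v) : #(P.erase root) = depth z := by
  rw [ht.erase_root_eq_image hP, card_image_of_injOn (ht.injOn_iterate_parent z), card_range]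

theorem sum_erase_root_sub {M : Type*} [AddCommGroup M] (ht : IsRootedTree root parent depth)
    (hP : ∀ v, v ∈ P ↔ ∃ k, parent^[k] z = v) (f : V → M) :
    ∑ v ∈ P.erase root, (f (parent v) - f v) = f root - f z := by
  rw [ht.erase_root_eq_image hP, sum_image (ht.injOn_iterate_parent z)]
  simp only [← Function.iterate_succ_apply' parent]
  rw [sum_range_sub (fun k => f (parent^[k] z)), ht.iterate_parent_of_depth_le z le_rfl,
    Function.iterate_zero_apply]

theorem sum_offPath_le [Fintype V] (ht : IsRootedTree root parent depth) {color : V → Bool}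
    (hcolor : ∀ u v, u ≠ root → v ≠ root → parent u = parent v → color u = color v → u = v)
    (hz : ∀ u, u ≠ root → parent u ≠ z) (hP : ∀ v, v ∈ P ↔ ∃ k, parent^[k] z = v)
    {f : Bool → ℝ} (hf : ∀ c, 0 ≤ f c) :
    ∑ v with v ≠ root ∧ v ∉ P ∧ parent v ∈ P, f (color v) ≤
      ∑ v ∈ P.erase root, f (!color v) := by
  set S : Finset V := {v | v ≠ root ∧ v ∉ P ∧ parent v ∈ P}
  set sibling : V → V := fun v => parent^[depth z - depth v] z
  have hsibling : ∀ v ∈ S,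
      sibling v ∈ P.erase root ∧ parent (sibling v) = parent v ∧ color (sibling v) = !color v := by
    intro v hv
    obtain ⟨hv, hvP, hpv⟩ := (mem_filter.1 hv).2
    obtain ⟨hsr, hsp⟩ := ht.iterate_parent_sub_depth_sibling hz hP hv hpv
    have hsP : sibling v ∈ P := (hP _).2 ⟨_, rfl⟩
    refine ⟨mem_erase.2 ⟨hsr, hsP⟩, hsp, ?_⟩
    have hne : sibling v ≠ v := fun h => hvP (h ▸ hsP)
    cases hc : color v <;> cases hcs : color (sibling v) <;>
      first | rfl | exact absurd (hcolor _ _ hsr hv hsp (hcs.trans hc.symm)) hne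
  have hinj : Set.InjOn sibling S := by
    intro v hv v' hv' h
    obtain ⟨-, hpv, hcv⟩ := hsibling v hv
    obtain ⟨-, hpv', hcv'⟩ := hsibling v' hv'
    refine hcolor v v' (mem_filter.1 hv).2.1 (mem_filter.1 hv').2.1 (hpv.symm.trans (h ▸ hpv')) ?_
    simpa [h, hcv'] using hcv.symm
  calc ∑ v ∈ S, f (color v) = ∑ v ∈ S, f (!color (sibling v)) :=
        sum_congr rfl fun v hv => by rw [(hsibling v hv).2.2, Bool.not_not]
    _ ≤ ∑ v ∈ P.erase root, f (!color v) :=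
        sum_comp_le_sum_of_injOn (f := fun u => f (!color u))
          (fun v hv => (hsibling v hv).1) hinj fun _ _ => hf _

end IsRootedTree

theorem eq_of_parent_eq_of_color_eq {V : Type*} {root : V} {parent : V → V} {color : V → Bool}
    (hbin : ∀ v, (∃ u, u ≠ root ∧ parent u = v) →
      ∃ b r, b ≠ r ∧ b ≠ root ∧ r ≠ root ∧ parent b = v ∧ parent r = v ∧
        color b = true ∧ color r = false ∧
        ∀ u, u ≠ root → parent u = v → (u = b ∨ u = r))
    (u v : V) (hu : u ≠ root) (hv : v ≠ root) (hp : parent u = parent v)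
    (hc : color u = color v) : u = v := by
  obtain ⟨b, r, -, -, -, -, -, hcb, hcr, hchild⟩ := hbin (parent v) ⟨v, hv, rfl⟩
  rcases hchild u hu hp with rfl | rfl <;> rcases hchild v hv rfl with rfl | rfl <;> simp_all

/-- `W_b = 1/G` on black edges (`true`), `W_r = 1/T` on red ones (`false`). -/
noncomputable def colorWeight (G T : ℕ) (c : Bool) : ℝ :=
  if c then (G : ℝ)⁻¹ else (T : ℝ)⁻¹

theorem colorWeight_pos {G T : ℕ} (hG : 1 ≤ G) (hT : 1 ≤ T) (c : Bool) :
    0 < colorWeight G T c := by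
  unfold colorWeight
  split_ifs <;> positivity

theorem sum_inv_colorWeight_le {α : Type*} {s : Finset α} {c : α → Bool} {G T : ℕ}
    (hs : #s ≤ T) (hred : #{a ∈ s | c a = false} ≤ G) :
    ∑ a ∈ s, (colorWeight G T (c a))⁻¹ ≤ 2 * G * T := by
  calc ∑ a ∈ s, (colorWeight G T (c a))⁻¹
      ≤ T * (colorWeight G T true)⁻¹ + G * (colorWeight G T false)⁻¹ :=
        sum_comp_bool_le s c (fun _ => inv_nonneg.2 (by unfold colorWeight; positivity)) hs hred
    _ = 2 * G * T := by
        simp only [colorWeight, if_true, Bool.false_eq_true, if_false, inv_inv]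
        ring

theorem sum_colorWeight_not_le {α : Type*} {s : Finset α} {c : α → Bool} {G T : ℕ}
    (hG : 1 ≤ G) (hT : 1 ≤ T) (hs : #s ≤ T) (hred : #{a ∈ s | c a = false} ≤ G) :
    ∑ a ∈ s, colorWeight G T (!c a) ≤ 2 := by
  have hG0 : (G : ℝ) ≠ 0 := by positivity
  have hT0 : (T : ℝ) ≠ 0 := by positivity
  calc ∑ a ∈ s, colorWeight G T (!c a)
      ≤ T * colorWeight G T (!true) + G * colorWeight G T (!false) :=
        sum_comp_bool_le s c (fun _ => (colorWeight_pos hG hT _).le) hs hred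
    _ = 2 := by
        simp only [colorWeight, Bool.not_true, Bool.not_false, if_true, Bool.false_eq_true,
          if_false]
        rw [mul_inv_cancel₀ hT0, mul_inv_cancel₀ hG0]
        norm_num
/-- Complexity bound of the span program built from a binary decision tree of depth at most
`T` with a guessing algorithm making at most `G` mistakes: with weights `W_b = 1/G`,
`W_r = 1/T`, the positive witness `w` (supported on the root-to-leaf path, with coordinate
`W_{c(e)}^{−1/2}` on each path edge) and the negative witness `w̄ = Σ_{v ∈ P} χ_v` satisfy
`A w = χ_{z₀} − χ_z`, `‖w‖² ≤ 2GT`, `‖A†w̄‖² ≤ 2` and `‖w‖·‖A†w̄‖ ≤ 2√(GT)`. -/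
theorem tree_span_program_complexity
    {V : Type*} [Fintype V] [DecidableEq V]
    (root : V) (parent : V → V) (color : V → Bool) (depth : V → ℕ)
    (hproot : parent root = root)
    (hdroot : depth root = 0)
    (hdparent : ∀ v, v ≠ root → depth (parent v) + 1 = depth v)
    (hbin : ∀ v, (∃ u, u ≠ root ∧ parent u = v) →
      ∃ b r, b ≠ r ∧ b ≠ root ∧ r ≠ root ∧ parent b = v ∧ parent r = v ∧
        color b = true ∧ color r = false ∧
        ∀ u, u ≠ root → parent u = v → (u = b ∨ u = r))
    (T G : ℕ) (hT : 1 ≤ T) (hG : 1 ≤ G)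
    (A : EuclideanSpace ℂ {v : V // v ≠ root} →ₗ[ℂ] EuclideanSpace ℂ V)
    (hA : ∀ e : {v : V // v ≠ root},
      A (EuclideanSpace.single e 1) =
        ((Real.sqrt (if color e.1 then ((G : ℝ))⁻¹ else ((T : ℝ))⁻¹) : ℝ) : ℂ) •
          (EuclideanSpace.single (parent e.1) 1 - EuclideanSpace.single e.1 1))
    (z : V) (hz : ¬∃ u, u ≠ root ∧ parent u = z)
    (P : Finset V) (hP : ∀ v, v ∈ P ↔ ∃ k : ℕ, parent^[k] z = v)
    (hT' : depth z ≤ T)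
    (hG' : (P.filter (fun v => v ≠ root ∧ color v = false)).card ≤ G)
    (w : EuclideanSpace ℂ {v : V // v ≠ root})
    (hw : ∀ e : {v : V // v ≠ root}, w e =
      if e.1 ∈ P then
        (((Real.sqrt (if color e.1 then ((G : ℝ))⁻¹ else ((T : ℝ))⁻¹))⁻¹ : ℝ) : ℂ)
      else 0)
    (wbar : EuclideanSpace ℂ V)
    (hwbar : wbar = ∑ v ∈ P, EuclideanSpace.single v 1) :
    A w = EuclideanSpace.single root 1 - EuclideanSpace.single z 1 ∧
      ‖w‖ ^ 2 ≤ 2 * G * T ∧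
      ‖LinearMap.adjoint A wbar‖ ^ 2 ≤ 2 ∧
      ‖w‖ * ‖LinearMap.adjoint A wbar‖ ≤ 2 * Real.sqrt (G * T) := by
  have ht : IsRootedTree root parent depth := ⟨hproot, hdroot, hdparent⟩
  have hcolor := eq_of_parent_eq_of_color_eq hbin
  have hleaf : ∀ u, u ≠ root → parent u ≠ z := fun u hu h => hz ⟨u, hu, h⟩
  have hW : ∀ v, 0 < colorWeight G T (color v) := fun v => colorWeight_pos hG hT _
  have hpath : #(P.erase root) ≤ T := ht.card_erase_root hP ▸ hT'
  have hred : #{v ∈ P.erase root | color v = false} ≤ G := by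
    convert hG' using 2
    ext v
    simp only [mem_filter, mem_erase]
    tauto
  have hw2 : ‖w‖ ^ 2 ≤ 2 * G * T := by
    rw [norm_sq_eq_sum_inv_weight (W := fun v => colorWeight G T (color v)) (fun v => (hW v).le) hw]
    exact sum_inv_colorWeight_le hpath hred
  have hadj : ‖LinearMap.adjoint A wbar‖ ^ 2 ≤ 2 := by
    rw [hwbar, norm_sq_incidence_adjoint_sum_single (W := fun v => colorWeight G T (color v))
      (fun v => (hW v).le) hA fun _ => parent_mem_of_mem hP]
    exact (ht.sum_offPath_le hcolor hleaf hP fun c => (colorWeight_pos hG hT c).le).trans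
      (sum_colorWeight_not_le hG hT hpath hred)
  refine ⟨?_, hw2, hadj, ?_⟩
  · rw [incidence_apply_eq_sum hW hA hw]
    exact ht.sum_erase_root_sub hP fun v => EuclideanSpace.single v 1
  · refine le_of_pow_le_pow_left₀ two_ne_zero (by positivity) ?_
    calc (‖w‖ * ‖LinearMap.adjoint A wbar‖) ^ 2 = ‖w‖ ^ 2 * ‖LinearMap.adjoint A wbar‖ ^ 2 :=
          mul_pow ..
      _ ≤ 2 * G * T * 2 := mul_le_mul hw2 hadj (by positivity) (by positivity)
      _ = (2 * √(G * T)) ^ 2 := by rw [mul_pow, Real.sq_sqrt (by positivity)]; ring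
end
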